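/- Suppose all m jobs are unit-size, let (σ₁,…,σ_n) be a profile of preferred schedules, and let τ be a schedule in which job ℓ occupies position q and job k occupies position q+1 (i.e., τ(ℓ) = q and τ(k) = q+1), while every agent schedules k before ℓ (σ_a(k) < σ_a(ℓ) for all a). Let τ' be the schedule obtained from τ by swapping the positions of jobs k and ℓ. Then ∑_{a=1}^{n} T(τ', σ_a) ≤ ∑_{a=1}^{n} T(τ, σ_a). -/

import Mathlib

/-!
Swapping `k` and `ℓ` only changes the tardiness of these two jobs, and
`(x, s) ↦ x - s` (truncated at `0`) has increasing differences: moving the later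
position to the job with the earlier due date `σ k` and the earlier position to
the job with the later due date `σ ℓ` cannot increase `(τ k - σ k) + (τ ℓ - σ ℓ)`.
-/

open Finset Equiv

theorem Nat.sub_add_sub_le_sub_add_sub {x y s t : ℕ} (hxy : x ≤ y) (hst : s ≤ t) :
    x - s + (y - t) ≤ y - s + (x - t) := by
  omega

theorem Fintype.sum_apply_swap_le {α M : Type*} [Fintype α] [DecidableEq α]
    [AddCommMonoid M] [PartialOrder M] [IsOrderedAddMonoid M]
    (F : α → α → M) (k ℓ : α) (h : F k ℓ + F ℓ k ≤ F k k + F ℓ ℓ) :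
    ∑ i, F i (swap k ℓ i) ≤ ∑ i, F i i := by
  rcases eq_or_ne k ℓ with rfl | hkℓ
  · simp
  have hrest : ∀ i ∈ univ \ {k, ℓ}, F i (swap k ℓ i) = F i i := fun i hi => by
    simp only [mem_sdiff, mem_insert, mem_singleton, not_or] at hi
    rw [swap_apply_of_ne_of_ne hi.2.1 hi.2.2]
  rw [← sum_sdiff (subset_univ {k, ℓ}), ← sum_sdiff (subset_univ {k, ℓ}),
    Finset.sum_congr rfl hrest, sum_pair hkℓ, sum_pair hkℓ, swap_apply_left, swap_apply_right]
  exact add_le_add_right h _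

def tardiness {m : ℕ} (τ σ : Perm (Fin m)) : ℕ :=
  ∑ i, ((τ i : ℕ) - σ i)

theorem tardiness_trans_swap_le {m : ℕ} {τ : Perm (Fin m)} (σ : Perm (Fin m)) {k ℓ : Fin m}
    (hτ : τ ℓ ≤ τ k) (hσ : σ k ≤ σ ℓ) :
    tardiness (τ.trans (swap (τ k) (τ ℓ))) σ ≤ tardiness τ σ := by
  have hconj : ∀ i, swap (τ k) (τ ℓ) (τ i) = τ (swap k ℓ i) := fun i => by
    rw [swap_apply_apply]; simp
  simp only [tardiness, trans_apply, hconj]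
  exact Fintype.sum_apply_swap_le (fun i j => (τ j : ℕ) - σ i) k ℓ
    (Nat.sub_add_sub_le_sub_add_sub hτ hσ)

/-- Swap lemma for unit-size jobs: if job `ℓ` occupies position `q` and job `k`
position `q+1` in schedule `τ`, while every agent schedules `k` before `ℓ`, then
swapping the positions of `k` and `ℓ` does not increase the total tardiness
`∑_a ∑_i max (0, τ(i) − σ_a(i))`. -/
theorem swap_adjacent_unanimous_pair_total_tardiness (m n : ℕ)
    (σs : Fin n → Equiv.Perm (Fin m)) (τ : Equiv.Perm (Fin m))
    (k ℓ : Fin m) (q : ℕ)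
    (hℓ : (τ ℓ : ℕ) = q) (hk : (τ k : ℕ) = q + 1)
    (hpref : ∀ a : Fin n, σs a k < σs a ℓ) :
    ∑ a : Fin n, ∑ i : Fin m, (((τ.trans (Equiv.swap (τ k) (τ ℓ))) i : ℕ) - (σs a i : ℕ))
      ≤ ∑ a : Fin n, ∑ i : Fin m, ((τ i : ℕ) - (σs a i : ℕ)) := by
  have hτ : τ ℓ ≤ τ k := Fin.le_iff_val_le_val.mpr (by omega)
  exact sum_le_sum fun a _ => tardiness_trans_swap_le (σs a) hτ (hpref a).le
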